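/- arXiv:1910.13156 — 10 statements merged into one kernel-verified Lean document; each statement's English description precedes it below -/
import Mathlib

section
/- Let 0 < μ < λ2, α > 0, σ > 0, κ ≥ 0 and p ∈ (0,1). Then the pair (n_{2a}, n_{2d}) of strictly positive reals satisfies the equilibrium equations n_{2a}(λ2 − μ − α n_{2a}) + σ n_{2d} = 0 and p α n_{2a}² − (κμ + σ) n_{2d} = 0 if and only if n_{2a} = (λ2 − μ)(κμ + σ)/(α(κμ + (1−p)σ)) and n_{2d} = (λ2 − μ)² p (κμ + σ)/(α (κμ + (1−p)σ)²). In particular, the two-dimensional mutant ODE system has a unique coordinatewise positive equilibrium. -/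
/-! Eliminating the dormant population through the second equation, `n2d = p α n2a² / (κμ + σ)`,
turns the first equation into `n2a ((λ2 - μ)(κμ + σ) - α (κμ + (1 - p)σ) n2a) = 0`, whose only
nonzero root is the stated `n2a`; the stated `n2d` is then read off from the elimination. -/

section Equilibrium

variable {K : Type*} [Field K] {r α σ p S D a d : K}

theorem dormant_balance_iff (hS : S ≠ 0) : p * α * a ^ 2 - S * d = 0 ↔ d = p * α * a ^ 2 / S := by
  rw [sub_eq_zero, eq_div_iff hS]
  exact ⟨fun h => by rw [h, mul_comm], fun h => by rw [← h, mul_comm]⟩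

theorem active_balance_iff (hS : S ≠ 0) (hSD : S - p * σ = D) (ha : a ≠ 0) :
    a * (r - α * a) + σ * (p * α * a ^ 2 / S) = 0 ↔ α * D * a = r * S := by
  have key : a * (r - α * a) + σ * (p * α * a ^ 2 / S) = a * (r * S - α * D * a) / S := by
    rw [← hSD]; field_simp; ring
  rw [key, div_eq_zero_iff, or_iff_left hS, mul_eq_zero, or_iff_right ha, sub_eq_zero, eq_comm]

theorem dormant_at_equilibrium (hα : α ≠ 0) (hS : S ≠ 0) (hD : D ≠ 0) :
    p * α * (r * S / (α * D)) ^ 2 / S = r ^ 2 * p * S / (α * D ^ 2) := by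
  field_simp

theorem equilibrium_iff (hα : α ≠ 0) (hS : S ≠ 0) (hD : D ≠ 0) (hSD : S - p * σ = D)
    (ha : a ≠ 0) :
    (a * (r - α * a) + σ * d = 0 ∧ p * α * a ^ 2 - S * d = 0) ↔
      (a = r * S / (α * D) ∧ d = r ^ 2 * p * S / (α * D ^ 2)) := by
  rw [and_comm, dormant_balance_iff hS]
  constructor
  · rintro ⟨rfl, h⟩
    have ha_eq : a = r * S / (α * D) := by
      rw [eq_div_iff (mul_ne_zero hα hD), mul_comm]
      exact (active_balance_iff hS hSD ha).1 h
    exact ⟨ha_eq, by rw [ha_eq, dormant_at_equilibrium hα hS hD]⟩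
  · rintro ⟨ha_eq, hd_eq⟩
    have hd' : d = p * α * a ^ 2 / S := by rw [hd_eq, ha_eq, dormant_at_equilibrium hα hS hD]
    refine ⟨hd', ?_⟩
    rw [hd', active_balance_iff hS hSD ha, ha_eq]
    field_simp

end Equilibrium

theorem mutant_positive_equilibrium_unique_general
    (μ lam2 α σ κ p : ℝ)
    (hμ : 0 < μ) (hα : 0 < α) (hσ : 0 < σ) (hκ : 0 ≤ κ)
    (hp1 : p < 1)
    (n2a n2d : ℝ) (ha : 0 < n2a) :
    (n2a * (lam2 - μ - α * n2a) + σ * n2d = 0 ∧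
      p * α * n2a ^ 2 - (κ * μ + σ) * n2d = 0) ↔
    (n2a = (lam2 - μ) * (κ * μ + σ) / (α * (κ * μ + (1 - p) * σ)) ∧
      n2d = (lam2 - μ) ^ 2 * p * (κ * μ + σ) / (α * (κ * μ + (1 - p) * σ) ^ 2)) := by
  have hκμ : 0 ≤ κ * μ := mul_nonneg hκ hμ.le
  have hS : 0 < κ * μ + σ := by linarith
  have hD : 0 < κ * μ + (1 - p) * σ := by nlinarith
  exact equilibrium_iff hα.ne' hS.ne' hD.ne' (by ring) ha.ne'

/-- For `0 < μ < λ2`, `α > 0`, `σ > 0`, `κ ≥ 0`, `p ∈ (0,1)`, a pair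
`(n2a, n2d)` of strictly positive reals satisfies the equilibrium equations of the
two-dimensional mutant ODE system iff it equals the explicit equilibrium; in
particular the system has a unique coordinatewise positive equilibrium. -/
theorem mutant_positive_equilibrium_unique
    (μ lam2 α σ κ p : ℝ)
    (hμ : 0 < μ) (hμlam : μ < lam2) (hα : 0 < α) (hσ : 0 < σ) (hκ : 0 ≤ κ)
    (hp0 : 0 < p) (hp1 : p < 1)
    (n2a n2d : ℝ) (ha : 0 < n2a) (hd : 0 < n2d) :
    (n2a * (lam2 - μ - α * n2a) + σ * n2d = 0 ∧
      p * α * n2a ^ 2 - (κ * μ + σ) * n2d = 0) ↔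
    (n2a = (lam2 - μ) * (κ * μ + σ) / (α * (κ * μ + (1 - p) * σ)) ∧
      n2d = (lam2 - μ) ^ 2 * p * (κ * μ + σ) / (α * (κ * μ + (1 - p) * σ) ^ 2)) :=
  mutant_positive_equilibrium_unique_general μ lam2 α σ κ p hμ hα hσ hκ hp1 n2a n2d ha
end

section
/- Let 0 < μ < λ2, α > 0, σ > 0, κ ≥ 0 and p ∈ (0,1), and let n̄_{2a} = (λ2 − μ)(κμ + σ)/(α(κμ + (1−p)σ)) and n̄_{2d} = (λ2 − μ)² p (κμ + σ)/(α (κμ + (1−p)σ)²). Consider the real 2×2 Jacobian matrix A = [[λ2 − μ − 2α n̄_{2a}, σ], [2pα n̄_{2a}, −κμ − σ]]. Then det A = (κμ + σ)(λ2 − μ) > 0 and trace A < 0, and consequently every complex eigenvalue of A has strictly negative real part. -/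
/-!
The equilibrium satisfies `α n̄ (κμ + (1 - p)σ) = (λ₂ - μ)(κμ + σ)`. Substituting this into the
entries gives `det A = (κμ + σ)(λ₂ - μ)`, and since `κμ + (1 - p)σ ≤ κμ + σ` it also gives
`α n̄ ≥ λ₂ - μ`, whence `trace A ≤ -(λ₂ - μ) - (κμ + σ) < 0`. The eigenvalues of a real `2 × 2`
matrix are the roots of `z² - (trace A) z + det A`, and a root `z` of `z² - t z + d` with
`t < 0 < d` satisfies `(re z)(|z|² + d) = t |z|²` (multiply by `conj z` and take real parts), so
`re z < 0`.
-/

open Matrix Polynomial ComplexConjugate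

theorem Complex.re_neg_of_sq_sub_mul_add_eq_zero {t d : ℝ} (ht : t < 0) (hd : 0 < d) {z : ℂ}
    (hz : z ^ 2 - t * z + d = 0) : z.re < 0 := by
  have hz0 : z ≠ 0 := by
    rintro rfl
    norm_num [hd.ne'] at hz
  have hsq : 0 < Complex.normSq z := Complex.normSq_pos.2 hz0
  have key : z.re * (Complex.normSq z + d) = t * Complex.normSq z := by
    have h := congrArg Complex.re (congrArg (· * conj z) hz)
    simp only [sq, sub_mul, add_mul, mul_assoc, Complex.mul_conj, Complex.add_re, Complex.sub_re,
      Complex.mul_re, Complex.ofReal_re, Complex.ofReal_im, Complex.conj_re, Complex.conj_im,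
      Complex.zero_re, mul_zero, sub_zero, mul_neg, zero_mul, neg_zero] at h
    linarith
  nlinarith

theorem Matrix.re_neg_of_mem_spectrum_map_ofReal {A : Matrix (Fin 2) (Fin 2) ℝ}
    (htr : A.trace < 0) (hdet : 0 < A.det) {z : ℂ}
    (hz : z ∈ spectrum ℂ (A.map Complex.ofReal)) : z.re < 0 := by
  rw [mem_spectrum_iff_isRoot_charpoly,
    show A.map Complex.ofReal = A.map Complex.ofRealHom from rfl, charpoly_map, charpoly_fin_two,
    IsRoot.def] at hz
  refine Complex.re_neg_of_sq_sub_mul_add_eq_zero htr hdet ?_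
  simpa using hz

section MutantJacobian

variable {μ lam2 α σ κ p n : ℝ}

theorem alpha_mul_equilibrium_mul (hα : α ≠ 0) (hD : κ * μ + (1 - p) * σ ≠ 0) :
    α * ((lam2 - μ) * (κ * μ + σ) / (α * (κ * μ + (1 - p) * σ))) * (κ * μ + (1 - p) * σ) =
      (lam2 - μ) * (κ * μ + σ) := by
  rw [mul_div_assoc', mul_div_mul_left _ _ hα, div_mul_cancel₀ _ hD]

theorem det_mutantJacobian (heq : α * n * (κ * μ + (1 - p) * σ) = (lam2 - μ) * (κ * μ + σ)) :
    !![lam2 - μ - 2 * α * n, σ; 2 * p * α * n, -(κ * μ) - σ].det = (κ * μ + σ) * (lam2 - μ) := by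
  rw [det_fin_two_of]
  linear_combination 2 * heq

theorem trace_mutantJacobian_neg
    (heq : α * n * (κ * μ + (1 - p) * σ) = (lam2 - μ) * (κ * μ + σ))
    (hD : 0 < κ * μ + (1 - p) * σ) (hpσ : 0 ≤ p * σ) (hμlam : μ < lam2) :
    !![lam2 - μ - 2 * α * n, σ; 2 * p * α * n, -(κ * μ) - σ].trace < 0 := by
  have hge : lam2 - μ ≤ α * n := by
    refine le_of_mul_le_mul_right ?_ hD
    nlinarith
  rw [trace_fin_two_of]
  nlinarith

end MutantJacobian

/-- At the positive equilibrium of the two-dimensional mutant ODE system,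
the Jacobian `A = [[λ2 − μ − 2α n̄2a, σ], [2pα n̄2a, −κμ − σ]]` has
`det A = (κμ + σ)(λ2 − μ) > 0` and negative trace, hence every complex eigenvalue of `A`
has strictly negative real part. -/
theorem jacobian_at_positive_equilibrium_stable
    (μ lam2 α σ κ p : ℝ)
    (hμ : 0 < μ) (hμlam : μ < lam2) (hα : 0 < α) (hσ : 0 < σ) (hκ : 0 ≤ κ)
    (hp0 : 0 < p) (hp1 : p < 1) :
    let n2a : ℝ := (lam2 - μ) * (κ * μ + σ) / (α * (κ * μ + (1 - p) * σ))
    let A : Matrix (Fin 2) (Fin 2) ℝ :=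
      !![lam2 - μ - 2 * α * n2a, σ; 2 * p * α * n2a, -(κ * μ) - σ]
    A.det = (κ * μ + σ) * (lam2 - μ) ∧ 0 < A.det ∧ A.trace < 0 ∧
      ∀ z : ℂ, z ∈ spectrum ℂ (A.map Complex.ofReal) → z.re < 0 := by
  intro n2a A
  have hκμ : 0 ≤ κ * μ := mul_nonneg hκ hμ.le
  have hD : 0 < κ * μ + (1 - p) * σ := by nlinarith
  have heq := alpha_mul_equilibrium_mul (lam2 := lam2) hα.ne' hD.ne'
  have hdet : A.det = (κ * μ + σ) * (lam2 - μ) := det_mutantJacobian heq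
  have hdet_pos : 0 < A.det := hdet ▸ mul_pos (by positivity) (sub_pos.2 hμlam)
  have htr : A.trace < 0 := trace_mutantJacobian_neg heq hD (mul_pos hp0 hσ).le hμlam
  exact ⟨hdet, hdet_pos, htr, fun _ => re_neg_of_mem_spectrum_map_ofReal htr hdet_pos⟩
end

section
/- Let 0 < μ < λ2 < λ1, σ > 0, κ ≥ 0 and p ∈ (0,1), and let J = [[λ2 − λ1, p(λ1 − μ)], [σ, −κμ − σ]]. Then J has a strictly positive real eigenvalue if and only if λ1 − λ2 < p(λ1 − μ) σ/(κμ + σ); moreover, since trace J < 0, J never has two eigenvalues with positive real part. -/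
/-!
A positive eigenvalue of the 2×2 mean matrix `J` is a positive root of
`r² - (tr J) r + det J`. Since `tr J < 0`, such a root exists exactly when `det J < 0`, and
clearing the denominator `κμ + σ > 0` turns `det J < 0` into the invasion condition. Two
distinct eigenvalues of a 2×2 matrix sum to its trace, so they cannot both have positive real
part when the trace is negative.
-/

open Matrix

namespace Matrix

section Field

variable {K : Type*} [Field K]

theorem mem_spectrum_fin_two_iff (A : Matrix (Fin 2) (Fin 2) K) (r : K) :
    r ∈ spectrum K A ↔ r ^ 2 - A.trace * r + A.det = 0 := by
  simp [mem_spectrum_iff_isRoot_charpoly, charpoly_fin_two]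

theorem add_eq_trace_of_mem_spectrum_fin_two {A : Matrix (Fin 2) (Fin 2) K} {z w : K}
    (hz : z ∈ spectrum K A) (hw : w ∈ spectrum K A) (hne : z ≠ w) : z + w = A.trace := by
  rw [mem_spectrum_fin_two_iff] at hz hw
  have h : (z - w) * (z + w - A.trace) = 0 := by linear_combination hz - hw
  rcases mul_eq_zero.mp h with h | h
  · exact absurd (sub_eq_zero.mp h) hne
  · exact sub_eq_zero.mp h

end Field

theorem exists_pos_mem_spectrum_of_det_neg {A : Matrix (Fin 2) (Fin 2) ℝ} (hdet : A.det < 0) :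
    ∃ r : ℝ, 0 < r ∧ r ∈ spectrum ℝ A := by
  set t := A.trace
  set s := √(t ^ 2 - 4 * A.det)
  have hs : s ^ 2 = t ^ 2 - 4 * A.det := Real.sq_sqrt (by nlinarith [sq_nonneg t])
  have ht : |t| < s := by
    rw [← sq_lt_sq₀ (abs_nonneg t) (Real.sqrt_nonneg _), sq_abs]
    linarith
  refine ⟨(t + s) / 2, by linarith [neg_abs_le t], ?_⟩
  rw [mem_spectrum_fin_two_iff]
  linear_combination hs / 4

theorem det_neg_of_pos_mem_spectrum {A : Matrix (Fin 2) (Fin 2) ℝ} (htr : A.trace ≤ 0) {r : ℝ}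
    (hr : 0 < r) (hmem : r ∈ spectrum ℝ A) : A.det < 0 := by
  rw [mem_spectrum_fin_two_iff] at hmem
  nlinarith [mul_nonpos_of_nonpos_of_nonneg htr hr.le]

theorem exists_pos_mem_spectrum_iff_det_neg {A : Matrix (Fin 2) (Fin 2) ℝ} (htr : A.trace ≤ 0) :
    (∃ r : ℝ, 0 < r ∧ r ∈ spectrum ℝ A) ↔ A.det < 0 :=
  ⟨fun ⟨_, hr, hmem⟩ => det_neg_of_pos_mem_spectrum htr hr hmem,
    exists_pos_mem_spectrum_of_det_neg⟩

theorem eq_of_mem_spectrum_map_ofReal_of_re_pos {A : Matrix (Fin 2) (Fin 2) ℝ}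
    (htr : A.trace < 0) {z w : ℂ} (hz : z ∈ spectrum ℂ (A.map Complex.ofReal))
    (hw : w ∈ spectrum ℂ (A.map Complex.ofReal)) (hz0 : 0 < z.re) (hw0 : 0 < w.re) :
    z = w := by
  by_contra hne
  have htr_map : (A.map Complex.ofReal).trace = A.trace :=
    (AddMonoidHom.map_trace Complex.ofRealHom A).symm
  have hsum := congrArg Complex.re (add_eq_trace_of_mem_spectrum_fin_two hz hw hne)
  rw [htr_map, Complex.add_re, Complex.ofReal_re] at hsum
  linarith

end Matrix

theorem mean_matrix_positive_eigenvalue_iff_invasion_general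
    (lam1 lam2 μ σ κ p : ℝ)
    (hμ : 0 < μ) (hlam : lam2 < lam1) (hσ : 0 < σ)
    (hκ : 0 ≤ κ) :
    let J : Matrix (Fin 2) (Fin 2) ℝ :=
      !![lam2 - lam1, p * (lam1 - μ); σ, -(κ * μ) - σ]
    ((∃ r : ℝ, 0 < r ∧ r ∈ spectrum ℝ J) ↔
        lam1 - lam2 < p * (lam1 - μ) * σ / (κ * μ + σ)) ∧
      J.trace < 0 ∧
      ∀ z w : ℂ, z ∈ spectrum ℂ (J.map Complex.ofReal) →
        w ∈ spectrum ℂ (J.map Complex.ofReal) → 0 < z.re → 0 < w.re → z = w := by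
  intro J
  have hden : 0 < κ * μ + σ := by positivity
  have htr : J.trace < 0 := by
    rw [trace_fin_two_of]
    linarith
  have hdet : J.det < 0 ↔ lam1 - lam2 < p * (lam1 - μ) * σ / (κ * μ + σ) := by
    rw [det_fin_two_of, lt_div_iff₀ hden]
    constructor <;> intro <;> linarith
  exact ⟨(exists_pos_mem_spectrum_iff_det_neg htr.le).trans hdet, htr,
    fun _ _ => eq_of_mem_spectrum_map_ofReal_of_re_pos htr⟩

/-- For `0 < μ < λ2 < λ1`, the mean matrix
`J = [[λ2 − λ1, p(λ1 − μ)], [σ, −κμ − σ]]` has a strictly positive real eigenvalue iff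
the invasion condition `λ1 − λ2 < p(λ1 − μ)σ/(κμ + σ)` holds; moreover `trace J < 0`
and `J` never has two (distinct) eigenvalues with positive real part. -/
theorem mean_matrix_positive_eigenvalue_iff_invasion
    (lam1 lam2 μ σ κ p : ℝ)
    (hμ : 0 < μ) (hμlam : μ < lam2) (hlam : lam2 < lam1) (hσ : 0 < σ)
    (hκ : 0 ≤ κ) (hp0 : 0 < p) (hp1 : p < 1) :
    let J : Matrix (Fin 2) (Fin 2) ℝ :=
      !![lam2 - lam1, p * (lam1 - μ); σ, -(κ * μ) - σ]
    ((∃ r : ℝ, 0 < r ∧ r ∈ spectrum ℝ J) ↔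
        lam1 - lam2 < p * (lam1 - μ) * σ / (κ * μ + σ)) ∧
      J.trace < 0 ∧
      ∀ z w : ℂ, z ∈ spectrum ℂ (J.map Complex.ofReal) →
        w ∈ spectrum ℂ (J.map Complex.ofReal) → 0 < z.re → 0 < w.re → z = w :=
  mean_matrix_positive_eigenvalue_iff_invasion_general lam1 lam2 μ σ κ p hμ hlam hσ hκ
end

section
/- Let 0 < μ < λ2 < λ1, α > 0, σ > 0, κ ≥ 0 and p ∈ (0,1), and assume the invasion condition λ1 − λ2 < p(λ1 − μ) σ/(κμ + σ). Set n̄1 = (λ1 − μ)/α, n̄_{2a} = (λ2 − μ)(κμ + σ)/(α(κμ + (1−p)σ)) and n̄_{2d} = (λ2 − μ)² p (κμ + σ)/(α (κμ + (1−p)σ)²). Then the set of coordinatewise nonnegative equilibria of the three-dimensional Lotka–Volterra-type system, i.e. of triples (n1, n_{2a}, n_{2d}) ∈ [0,∞)³ satisfying n1(λ1 − μ − α(n1 + n_{2a})) = 0, n_{2a}(λ2 − μ − α(n1 + n_{2a})) + σ n_{2d} = 0, and pα n_{2a}(n1 + n_{2a}) − (κμ + σ) n_{2d} = 0, is exactly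 {(0,0,0), (n̄1, 0, 0), (0, n̄_{2a}, n̄_{2d})}. -/
/-!
Eliminating the dormant density between the second and third equations leaves
`n₂ₐ · ((κμ + σ)(λ₂ - μ) - α(n₁ + n₂ₐ)(κμ + (1 - p)σ)) = 0`. If `n₂ₐ = 0`, the dormant
density vanishes and the first equation gives the trivial or the resident equilibrium. Otherwise
the total active density is pinned down, and at that density the invasion condition makes the
resident's per-capita growth rate negative, so `n₁ = 0`; the remaining equations are then linear
in `n₂ₐ` and `n₂d`.
-/

namespace LotkaVolterra

/-- The densities are not required to be nonnegative. -/
def IsEquilibrium (lam1 lam2 μ α σ κ p n1 n2a n2d : ℝ) : Prop :=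
  n1 * (lam1 - μ - α * (n1 + n2a)) = 0 ∧
  n2a * (lam2 - μ - α * (n1 + n2a)) + σ * n2d = 0 ∧
  p * α * n2a * (n1 + n2a) - (κ * μ + σ) * n2d = 0

section

variable {lam1 lam2 μ α σ κ p n1 n2a n2d : ℝ}

theorem IsEquilibrium.active_eq_zero_or
    (h : IsEquilibrium lam1 lam2 μ α σ κ p n1 n2a n2d) :
    n2a = 0 ∨ α * (n1 + n2a) * (κ * μ + (1 - p) * σ) = (κ * μ + σ) * (lam2 - μ) := by
  obtain ⟨-, h2, h3⟩ := h
  have key : n2a * ((κ * μ + σ) * (lam2 - μ) - α * (n1 + n2a) * (κ * μ + (1 - p) * σ)) = 0 := by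
    linear_combination (κ * μ + σ) * h2 + σ * h3
  rcases mul_eq_zero.mp key with h0 | hS
  · exact .inl h0
  · exact .inr (by linarith)

theorem IsEquilibrium.dormant_eq (h : IsEquilibrium lam1 lam2 μ α σ κ p n1 n2a n2d)
    (hD : κ * μ + σ ≠ 0) : n2d = p * α * n2a * (n1 + n2a) / (κ * μ + σ) := by
  rw [eq_div_iff hD]
  linear_combination -h.2.2

theorem IsEquilibrium.resident_eq_zero_or (h : IsEquilibrium lam1 lam2 μ α σ κ p n1 n2a n2d) :
    n1 = 0 ∨ lam1 - μ - α * (n1 + n2a) = 0 :=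
  mul_eq_zero.mp h.1

/-- The invasion condition, cleared of its denominator, says that the resident cannot grow at
the total active density `s` that a resident-free equilibrium with mutants present must have. -/
theorem resident_growth_neg_of_invasion {s : ℝ} (hE : 0 < κ * μ + (1 - p) * σ)
    (hinv : (lam1 - lam2) * (κ * μ + σ) < p * (lam1 - μ) * σ)
    (hs : α * s * (κ * μ + (1 - p) * σ) = (κ * μ + σ) * (lam2 - μ)) :
    lam1 - μ - α * s < 0 := by
  have : (lam1 - μ - α * s) * (κ * μ + (1 - p) * σ) < 0 := by
    linear_combination hinv - hs
  exact neg_of_mul_neg_left this hE.le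

theorem IsEquilibrium.eq_zero_or_eq_resident_or_eq_coexistence
    (h : IsEquilibrium lam1 lam2 μ α σ κ p n1 n2a n2d) (hα : α ≠ 0) (hD : 0 < κ * μ + σ)
    (hE : 0 < κ * μ + (1 - p) * σ) (hinv : (lam1 - lam2) * (κ * μ + σ) < p * (lam1 - μ) * σ) :
    (n1, n2a, n2d) = (0, 0, 0) ∨ (n1, n2a, n2d) = ((lam1 - μ) / α, 0, 0) ∨
      (n1, n2a, n2d) = (0, (lam2 - μ) * (κ * μ + σ) / (α * (κ * μ + (1 - p) * σ)),
        (lam2 - μ) ^ 2 * p * (κ * μ + σ) / (α * (κ * μ + (1 - p) * σ) ^ 2)) := by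
  have hn2d := h.dormant_eq hD.ne'
  rcases h.active_eq_zero_or with rfl | hS
  · simp only [mul_zero, zero_mul, zero_div] at hn2d
    subst hn2d
    rcases h.resident_eq_zero_or with rfl | h1
    · exact .inl rfl
    · refine .inr (.inl ?_)
      rw [Prod.mk.injEq, eq_div_iff hα]
      exact ⟨by linarith, rfl⟩
  · obtain rfl : n1 = 0 := h.resident_eq_zero_or.resolve_right
      (resident_growth_neg_of_invasion hE hinv hS).ne
    have hn2a : n2a = (lam2 - μ) * (κ * μ + σ) / (α * (κ * μ + (1 - p) * σ)) := by
      rw [eq_div_iff (mul_ne_zero hα hE.ne')]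
      linear_combination hS
    refine .inr (.inr ?_)
    rw [hn2d, hn2a]
    simp only [zero_add, Prod.mk.injEq, true_and]
    field_simp

theorem isEquilibrium_zero : IsEquilibrium lam1 lam2 μ α σ κ p 0 0 0 := by
  simp [IsEquilibrium]

theorem isEquilibrium_resident (hα : α ≠ 0) :
    IsEquilibrium lam1 lam2 μ α σ κ p ((lam1 - μ) / α) 0 0 := by
  refine ⟨?_, by ring, by ring⟩
  rw [add_zero, mul_div_cancel₀ _ hα, sub_self, mul_zero]

theorem isEquilibrium_coexistence (hα : α ≠ 0) (hE : κ * μ + (1 - p) * σ ≠ 0) :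
    IsEquilibrium lam1 lam2 μ α σ κ p 0
      ((lam2 - μ) * (κ * μ + σ) / (α * (κ * μ + (1 - p) * σ)))
      ((lam2 - μ) ^ 2 * p * (κ * μ + σ) / (α * (κ * μ + (1 - p) * σ) ^ 2)) := by
  refine ⟨zero_mul _, ?_, ?_⟩ <;>
  · -- with `κμ + σ` written as `E + pσ`, `field_simp` sees the only denominator `E`
    rw [show κ * μ + σ = κ * μ + (1 - p) * σ + p * σ by ring]
    generalize κ * μ + (1 - p) * σ = E at hE ⊢
    field_simp
    ring

end

end LotkaVolterra

/-- Under the invasion condition, the set of coordinatewise nonnegative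
equilibria of the three-dimensional Lotka–Volterra-type system is exactly
`{(0,0,0), (n̄1,0,0), (0,n̄2a,n̄2d)}`. -/
theorem lotka_volterra_equilibria
    (lam1 lam2 μ α σ κ p : ℝ)
    (hμ : 0 < μ) (hμlam : μ < lam2) (hlam : lam2 < lam1) (hα : 0 < α) (hσ : 0 < σ)
    (hκ : 0 ≤ κ) (hp0 : 0 < p) (hp1 : p < 1)
    (hinv : lam1 - lam2 < p * (lam1 - μ) * σ / (κ * μ + σ)) :
    let n1bar : ℝ := (lam1 - μ) / α
    let n2abar : ℝ := (lam2 - μ) * (κ * μ + σ) / (α * (κ * μ + (1 - p) * σ))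
    let n2dbar : ℝ := (lam2 - μ) ^ 2 * p * (κ * μ + σ) / (α * (κ * μ + (1 - p) * σ) ^ 2)
    {x : ℝ × ℝ × ℝ |
        0 ≤ x.1 ∧ 0 ≤ x.2.1 ∧ 0 ≤ x.2.2 ∧
        x.1 * (lam1 - μ - α * (x.1 + x.2.1)) = 0 ∧
        x.2.1 * (lam2 - μ - α * (x.1 + x.2.1)) + σ * x.2.2 = 0 ∧
        p * α * x.2.1 * (x.1 + x.2.1) - (κ * μ + σ) * x.2.2 = 0} =
      {((0 : ℝ), (0 : ℝ), (0 : ℝ)), (n1bar, 0, 0), (0, n2abar, n2dbar)} := by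
  intro n1bar n2abar n2dbar
  have hD : 0 < κ * μ + σ := by positivity
  have hE : 0 < κ * μ + (1 - p) * σ := by nlinarith
  ext x
  constructor
  · rintro ⟨-, -, -, h⟩
    exact LotkaVolterra.IsEquilibrium.eq_zero_or_eq_resident_or_eq_coexistence h hα.ne' hD hE
      ((lt_div_iff₀ hD).mp hinv)
  · rintro (rfl | rfl | rfl)
    · exact ⟨le_rfl, le_rfl, le_rfl, LotkaVolterra.isEquilibrium_zero⟩
    · exact ⟨div_nonneg (by linarith) hα.le, le_rfl, le_rfl,
        LotkaVolterra.isEquilibrium_resident hα.ne'⟩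
    · exact ⟨le_rfl, by positivity, by positivity,
        LotkaVolterra.isEquilibrium_coexistence hα.ne' hE.ne'⟩
end

section
/- Let 0 < μ < λ2 < λ1, σ > 0, κ ≥ 0 and p ∈ (0,1), and assume the invasion condition λ1 − λ2 < p(λ1 − μ) σ/(κμ + σ). Consider the real 3×3 matrix B = [[−λ1 + μ, −λ1 + μ, 0], [0, λ2 − λ1, σ], [0, p(λ1 − μ), −(κμ + σ)]] (the Jacobian of the three-dimensional Lotka–Volterra-type system at the equilibrium (n̄1, 0, 0) with n̄1 = (λ1 − μ)/α). Then det B > 0, all eigenvalues of B are real, and B has a strictly positive eigenvalue; in particular the equilibrium (n̄1, 0, 0) is linearly unstable. -/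
/-!
The first column of `B` is `(-λ1 + μ, 0, 0)`, so its characteristic polynomial factors as
`(X + λ1 - μ) · χ_J` with `J = [[λ2 − λ1, σ], [p(λ1 − μ), −(κμ + σ)]]`, and `det B = (μ - λ1) det J`.
The invasion condition says exactly that `det J < 0`. A real 2×2 matrix with negative
determinant has positive discriminant `tr² − 4 det`, hence two real eigenvalues whose product is
negative, one of them positive; and `det B` is a product of two negative numbers.
-/

open Matrix Polynomial

theorem exists_pos_add_eq_mul_eq_of_neg {t d : ℝ} (hd : d < 0) :
    ∃ r s : ℝ, 0 < r ∧ r + s = t ∧ r * s = d := by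
  set w := √(t ^ 2 - 4 * d)
  have hw : w ^ 2 = t ^ 2 - 4 * d := Real.sq_sqrt (by nlinarith [sq_nonneg t])
  have hwt : |t| < w := by
    rw [Real.lt_sqrt (abs_nonneg t), sq_abs]
    linarith
  refine ⟨(t + w) / 2, (t - w) / 2, ?_, by ring, ?_⟩
  · linarith [neg_abs_le t]
  · linear_combination (-1 / 4 : ℝ) * hw

namespace Matrix

section ColZero

variable {R : Type*} [CommRing R]

theorem det_fin_three_of_col_zero (a x y b c d e : R) :
    !![a, x, y; 0, b, c; 0, d, e].det = a * !![b, c; d, e].det := by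
  simp only [det_fin_three, det_fin_two_of, of_apply, cons_val', cons_val_zero, cons_val_one,
    cons_val, cons_val_fin_one]
  ring

theorem charpoly_fin_three_of_col_zero (a x y b c d e : R) :
    !![a, x, y; 0, b, c; 0, d, e].charpoly = (X - C a) * !![b, c; d, e].charpoly := by
  simp only [charpoly, det_fin_three, det_fin_two, charmatrix_apply_eq, ne_eq, Fin.reduceEq,
    not_false_eq_true, charmatrix_apply_ne, of_apply, cons_val', cons_val_zero, cons_val_one,
    cons_val, cons_val_fin_one, map_zero, neg_zero]
  ring

end ColZero

theorem exists_charpoly_eq_of_det_neg {A : Matrix (Fin 2) (Fin 2) ℝ} (hA : A.det < 0) :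
    ∃ r s : ℝ, 0 < r ∧ A.charpoly = (X - C r) * (X - C s) := by
  obtain ⟨r, s, hr, hsum, hprod⟩ := exists_pos_add_eq_mul_eq_of_neg (t := A.trace) hA
  refine ⟨r, s, hr, ?_⟩
  rw [charpoly_fin_two, ← hsum, ← hprod]
  simp only [map_add, map_mul]
  ring

end Matrix

theorem resident_equilibrium_unstable_general
    (lam1 lam2 μ σ κ p : ℝ)
    (hμ : 0 < μ) (hμlam : μ < lam2) (hlam : lam2 < lam1) (hσ : 0 < σ)
    (hκ : 0 ≤ κ)
    (hinv : lam1 - lam2 < p * (lam1 - μ) * σ / (κ * μ + σ)) :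
    let B : Matrix (Fin 3) (Fin 3) ℝ :=
      !![-lam1 + μ, -lam1 + μ, 0;
         0, lam2 - lam1, σ;
         0, p * (lam1 - μ), -(κ * μ + σ)]
    0 < B.det ∧
      (∀ z : ℂ, z ∈ spectrum ℂ (B.map Complex.ofReal) → z.im = 0) ∧
      ∃ r : ℝ, 0 < r ∧ r ∈ spectrum ℝ B := by
  intro B
  set J : Matrix (Fin 2) (Fin 2) ℝ := !![lam2 - lam1, σ; p * (lam1 - μ), -(κ * μ + σ)]
  have hJ : J.det < 0 := by
    rw [lt_div_iff₀ (by positivity)] at hinv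
    rw [det_fin_two_of]
    linarith
  obtain ⟨r, s, hr, hJchar⟩ := exists_charpoly_eq_of_det_neg hJ
  have hBchar : B.charpoly = (X - C (-lam1 + μ)) * ((X - C r) * (X - C s)) := by
    rw [← hJchar]
    exact charpoly_fin_three_of_col_zero ..
  refine ⟨?_, fun z hz => ?_, r, hr, ?_⟩
  · rw [det_fin_three_of_col_zero]
    exact mul_pos_of_neg_of_neg (by linarith) hJ
  · change z ∈ spectrum ℂ (B.map Complex.ofRealHom) at hz
    rw [mem_spectrum_iff_isRoot_charpoly, charpoly_map, hBchar] at hz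
    simp only [Polynomial.map_mul, Polynomial.map_sub, map_X, map_C, IsRoot.def, eval_mul,
      eval_sub, eval_X, eval_C, mul_eq_zero, sub_eq_zero] at hz
    rcases hz with rfl | rfl | rfl <;> simp
  · rw [mem_spectrum_iff_isRoot_charpoly, hBchar]
    simp

/-- Under the invasion condition, the Jacobian
`B = [[−λ1 + μ, −λ1 + μ, 0], [0, λ2 − λ1, σ], [0, p(λ1 − μ), −(κμ + σ)]]` at the
resident equilibrium `(n̄1, 0, 0)` has positive determinant, only real eigenvalues,
and a strictly positive eigenvalue; in particular `(n̄1, 0, 0)` is linearly unstable. -/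
theorem resident_equilibrium_unstable
    (lam1 lam2 μ σ κ p : ℝ)
    (hμ : 0 < μ) (hμlam : μ < lam2) (hlam : lam2 < lam1) (hσ : 0 < σ)
    (hκ : 0 ≤ κ) (hp0 : 0 < p) (hp1 : p < 1)
    (hinv : lam1 - lam2 < p * (lam1 - μ) * σ / (κ * μ + σ)) :
    let B : Matrix (Fin 3) (Fin 3) ℝ :=
      !![-lam1 + μ, -lam1 + μ, 0;
         0, lam2 - lam1, σ;
         0, p * (lam1 - μ), -(κ * μ + σ)]
    0 < B.det ∧
      (∀ z : ℂ, z ∈ spectrum ℂ (B.map Complex.ofReal) → z.im = 0) ∧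
      ∃ r : ℝ, 0 < r ∧ r ∈ spectrum ℝ B :=
  resident_equilibrium_unstable_general lam1 lam2 μ σ κ p hμ hμlam hlam hσ hκ hinv
end

section
/- Let 0 < μ < λ2 < λ1, α > 0, σ > 0, κ ≥ 0 and p ∈ (0,1), and assume the invasion condition λ1 − λ2 < p(λ1 − μ) σ/(κμ + σ). Set n̄_{2a} = (λ2 − μ)(κμ + σ)/(α(κμ + (1−p)σ)) and n̄_{2d} = (λ2 − μ)² p (κμ + σ)/(α (κμ + (1−p)σ)²). Then every complex eigenvalue of the 3×3 matrix B = [[λ1 − μ − α n̄_{2a}, 0, 0], [0, λ2 − μ − 2α n̄_{2a}, σ], [pα n̄_{2a}, 2pα n̄_{2a}, −(κμ + σ)]] has strictly negative real part; in particular the equilibrium (0, n̄_{2a}, n̄_{2d}) of the three-dimensional Lotka–Volterra-type system is asymptotically stable. -/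
/-!
The Jacobian is block lower triangular: its first row is `(a, 0, 0)` with
`a = λ₁ - μ - α n̄₂ₐ`, so its eigenvalues are `a` and those of the lower-right `2 × 2` block.
With `x = α n̄₂ₐ` the equilibrium equation reads `x (κμ + (1-p)σ) = (λ₂ - μ)(κμ + σ)`;
the invasion condition is exactly `a < 0`, while the block has negative trace
(since `x > λ₂ - μ`) and determinant `(λ₂ - μ)(κμ + σ) > 0`, so by the Routh–Hurwitz
criterion for quadratics both of its eigenvalues lie in the open left half-plane.
-/

open Matrix

theorem Complex.re_neg_of_mul_self_add_mul_add_eq_zero {β γ : ℝ} (hβ : 0 < β) (hγ : 0 < γ)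
    {z : ℂ} (h : z * z + β * z + γ = 0) : z.re < 0 := by
  have him : z.im * (2 * z.re + β) = 0 := by
    have := congrArg Complex.im h
    simp only [add_im, mul_im, ofReal_re, ofReal_im, zero_im] at this
    linarith
  have hre : z.re * z.re - z.im * z.im + β * z.re + γ = 0 := by
    have := congrArg Complex.re h
    simp only [add_re, mul_re, ofReal_re, ofReal_im, zero_re] at this
    linarith
  rcases mul_eq_zero.mp him with hreal | hvertex
  · rw [hreal] at hre
    nlinarith
  · linarith

theorem Matrix.det_scalar_sub_fin_three_of_row_zero {R : Type*} [CommRing R]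
    (M : Matrix (Fin 3) (Fin 3) R) (h01 : M 0 1 = 0) (h02 : M 0 2 = 0) (t : R) :
    (scalar (Fin 3) t - M).det =
      (t - M 0 0) * ((t - M 1 1) * (t - M 2 2) - M 1 2 * M 2 1) := by
  simp [det_fin_three, h01, h02]
  ring

theorem Matrix.re_neg_of_mem_spectrum_fin_three_of_row_zero (M : Matrix (Fin 3) (Fin 3) ℝ)
    (h01 : M 0 1 = 0) (h02 : M 0 2 = 0) (h00 : M 0 0 < 0) (htrace : M 1 1 + M 2 2 < 0)
    (hdet : 0 < M 1 1 * M 2 2 - M 1 2 * M 2 1) {z : ℂ}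
    (hz : z ∈ spectrum ℂ (M.map Complex.ofReal)) : z.re < 0 := by
  rw [mem_spectrum_iff_isRoot_charpoly, Polynomial.IsRoot.def, eval_charpoly,
    det_scalar_sub_fin_three_of_row_zero _ (by simp [h01]) (by simp [h02])] at hz
  rcases mul_eq_zero.mp hz with hlin | hquad
  · simpa [sub_eq_zero.mp hlin] using h00
  · refine Complex.re_neg_of_mul_self_add_mul_add_eq_zero (neg_pos.mpr htrace) hdet ?_
    simp only [map_apply] at hquad
    push_cast
    linear_combination hquad

theorem mutant_equilibrium_stable_general
    (lam1 lam2 μ α σ κ p : ℝ)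
    (hμ : 0 < μ) (hμlam : μ < lam2) (hα : 0 < α) (hσ : 0 < σ)
    (hκ : 0 ≤ κ) (hp0 : 0 < p) (hp1 : p < 1)
    (hinv : lam1 - lam2 < p * (lam1 - μ) * σ / (κ * μ + σ)) :
    let n2abar : ℝ := (lam2 - μ) * (κ * μ + σ) / (α * (κ * μ + (1 - p) * σ))
    let B : Matrix (Fin 3) (Fin 3) ℝ :=
      !![lam1 - μ - α * n2abar, 0, 0;
         0, lam2 - μ - 2 * α * n2abar, σ;
         p * α * n2abar, 2 * p * α * n2abar, -(κ * μ + σ)]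
    ∀ z : ℂ, z ∈ spectrum ℂ (B.map Complex.ofReal) → z.re < 0 := by
  intro n2abar B z hz
  have hK : 0 < κ * μ + σ := by positivity
  have hD : 0 < κ * μ + (1 - p) * σ := by nlinarith
  have hinv' : (lam1 - lam2) * (κ * μ + σ) < p * (lam1 - μ) * σ := (lt_div_iff₀ hK).mp hinv
  have hequil : α * n2abar * (κ * μ + (1 - p) * σ) = (lam2 - μ) * (κ * μ + σ) := by
    rw [mul_div_assoc', div_mul_eq_mul_div, div_eq_iff (mul_ne_zero hα.ne' hD.ne')]
    ring
  have hdet : 0 < (lam2 - μ) * (κ * μ + σ) := mul_pos (sub_pos.mpr hμlam) hK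
  have hx : lam2 - μ < α * n2abar := by
    nlinarith [mul_pos (sub_pos.mpr hμlam) (mul_pos hp0 hσ)]
  have ha : lam1 - μ < α * n2abar := by nlinarith
  refine re_neg_of_mem_spectrum_fin_three_of_row_zero B rfl rfl ?_ ?_ ?_ hz
  · show lam1 - μ - α * n2abar < 0
    nlinarith
  · show lam2 - μ - 2 * α * n2abar + -(κ * μ + σ) < 0
    nlinarith
  · show 0 < (lam2 - μ - 2 * α * n2abar) * -(κ * μ + σ) - σ * (2 * p * α * n2abar)
    linarith

/-- Under the invasion condition, every complex eigenvalue of the Jacobian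
of the three-dimensional Lotka–Volterra-type system at the equilibrium
`(0, n̄2a, n̄2d)` has strictly negative real part; in particular this equilibrium is
asymptotically stable. -/
theorem mutant_equilibrium_stable
    (lam1 lam2 μ α σ κ p : ℝ)
    (hμ : 0 < μ) (hμlam : μ < lam2) (hlam : lam2 < lam1) (hα : 0 < α) (hσ : 0 < σ)
    (hκ : 0 ≤ κ) (hp0 : 0 < p) (hp1 : p < 1)
    (hinv : lam1 - lam2 < p * (lam1 - μ) * σ / (κ * μ + σ)) :
    let n2abar : ℝ := (lam2 - μ) * (κ * μ + σ) / (α * (κ * μ + (1 - p) * σ))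
    let B : Matrix (Fin 3) (Fin 3) ℝ :=
      !![lam1 - μ - α * n2abar, 0, 0;
         0, lam2 - μ - 2 * α * n2abar, σ;
         p * α * n2abar, 2 * p * α * n2abar, -(κ * μ + σ)]
    ∀ z : ℂ, z ∈ spectrum ℂ (B.map Complex.ofReal) → z.re < 0 :=
  mutant_equilibrium_stable_general lam1 lam2 μ α σ κ p hμ hμlam hα hσ hκ hp0 hp1 hinv
end

section
/- Let 0 < μ < λ2, α > 0, σ > 0, κ ≥ 0 and p ∈ (0,1), and set n̄_{2a} = (λ2 − μ)(κμ + σ)/(α(κμ + (1−p)σ)) and n̄_{2d} = (λ2 − μ)² p (κμ + σ)/(α (κμ + (1−p)σ)²). Let (n_{2a}, n_{2d}) : [0,∞) → [0,∞)² be a solution of the system ṅ_{2a}(t) = n_{2a}(t)(λ2 − μ − α n_{2a}(t)) + σ n_{2d}(t), ṅ_{2d}(t) = pα n_{2a}(t)² − (κμ + σ) n_{2d}(t) with (n_{2a}(0), n_{2d}(0)) ∈ [0,∞)² \ {(0,0)}. Then (n_{2a}(t), n_{2d}(t)) converges to (n̄_{2a}, n̄_{2d}) as t → ∞. -/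
/-!
Write `u, v` for `n_{2a}, n_{2d}`, `r = λ₂ - μ` and `c = κ μ + σ`. The weighted sum
`(σ p + c) u + 2 σ v` is dissipative, so every solution is eventually bounded, and once `u` is
positive the logistic term keeps it above a positive level.

For a bounded function with `f' ≤ F (f) + o(1)` one has `F (limsup f) ≥ 0`: otherwise, close to
its limsup, `f` would be pushed down at a definite rate and would stay below the limsup for good.
Applied to both equations, with `A, B` the limsups and `a, b` the liminfs of `u, v`, this gives
`c B ≤ p α A²`, `0 ≤ A (r - α A) + σ B`, `p α a² ≤ c b` and `a (r - α a) + σ b ≤ 0`.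
Eliminating `B` and `b` squeezes `A ≤ r c / (α (c - σ p)) ≤ a`, so `u` converges, and then the
first and third inequalities force `v → p α n̄_{2a}² / c`.
-/

open Filter Set Topology

section Barrier

variable {f f' : ℝ → ℝ} {T ρ : ℝ}

/-- Compare `f` with the rising barriers `ρ + k (x - T + 1)`, which it can only touch where
`ρ < f`, and let `k → 0`. -/
theorem le_of_deriv_nonpos_above (hf : ∀ t ≥ T, HasDerivAt f (f' t) t)
    (hbarrier : ∀ t ≥ T, ρ < f t → f' t ≤ 0) (hT : f T ≤ ρ) : ∀ t ≥ T, f t ≤ ρ := by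
  intro t ht
  refine le_of_forall_pos_le_add fun ε hε => ?_
  set k := ε / (t - T + 1)
  have hk : 0 < k := div_pos hε (by linarith)
  have hB : ∀ x, HasDerivAt (fun x => ρ + k * (x - T + 1)) k x := fun x => by
    simpa using (((hasDerivAt_id x).sub_const T).add_const 1).const_mul k |>.const_add ρ
  have hle := image_le_of_deriv_right_lt_deriv_boundary
    (fun x hx => (hf x hx.1).continuousAt.continuousWithinAt)
    (fun x hx => (hf x hx.1).hasDerivWithinAt) (by simp; linarith) hB
    (fun x hx hfx => (hbarrier x hx.1 (by rw [hfx]; nlinarith [hx.1])).trans_lt hk)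
    ⟨ht, le_rfl⟩
  calc f t ≤ ρ + k * (t - T + 1) := hle
    _ = ρ + ε := by rw [div_mul_cancel₀ _ (by linarith)]

theorem le_of_deriv_nonneg_below (hf : ∀ t ≥ T, HasDerivAt f (f' t) t)
    (hbarrier : ∀ t ≥ T, f t < ρ → 0 ≤ f' t) (hT : ρ ≤ f T) : ∀ t ≥ T, ρ ≤ f t := by
  have := le_of_deriv_nonpos_above (f := -f) (ρ := -ρ) (fun t ht => (hf t ht).neg)
    (fun t ht h => neg_nonpos.2 (hbarrier t ht (neg_lt_neg_iff.1 h))) (neg_le_neg hT)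
  exact fun t ht => neg_le_neg_iff.1 (this t ht)

end Barrier

theorem eventually_le_of_deriv_le_neg {f f' : ℝ → ℝ} {ρ m : ℝ} (hm : 0 < m)
    (hf : ∀ᶠ t in atTop, HasDerivAt f (f' t) t)
    (hdrift : ∀ᶠ t in atTop, ρ ≤ f t → f' t ≤ -m) : ∀ᶠ t in atTop, f t ≤ ρ := by
  obtain ⟨T, hT⟩ := eventually_atTop.1 (hf.and hdrift)
  obtain ⟨t₁, ht₁, hft₁⟩ : ∃ t₁ ≥ T, f t₁ ≤ ρ := by
    by_contra! hgt
    set t := T + (f T - ρ) / m + 1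
    have ht : T ≤ t := by
      have : 0 ≤ (f T - ρ) / m := div_nonneg (sub_nonneg.2 (hgt T le_rfl).le) hm.le
      linarith
    have hdecay : f t ≤ f T - m * (t - T) := image_le_of_deriv_right_le_deriv_boundary
      (B := fun x => f T - m * (x - T)) (B' := fun _ => -m)
      (fun x hx => (hT x hx.1).1.continuousAt.continuousWithinAt)
      (fun x hx => (hT x hx.1).1.hasDerivWithinAt) (by simp) (by fun_prop)
      (fun x _ => by
        simpa using (((hasDerivAt_id x).sub_const T).const_mul m).const_sub (f T)
          |>.hasDerivWithinAt)
      (fun x hx => (hT x hx.1).2 (hgt x hx.1).le) ⟨ht, le_rfl⟩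
    have : m * (t - T) = f T - ρ + m := by simp only [t]; field_simp; ring
    linarith [hgt t ht]
  filter_upwards [eventually_ge_atTop t₁] with t ht
  exact le_of_deriv_nonpos_above (fun s hs => (hT s (ht₁.trans hs)).1)
    (fun s hs hρ => ((hT s (ht₁.trans hs)).2 hρ.le).trans (neg_nonpos.2 hm.le)) hft₁ t ht

section Fluctuation

variable {f f' F : ℝ → ℝ}

theorem apply_limsup_nonneg_of_deriv_le (hf : ∀ᶠ t in atTop, HasDerivAt f (f' t) t)
    (hbdd : IsBoundedUnder (· ≤ ·) atTop f) (hbdd' : IsBoundedUnder (· ≥ ·) atTop f)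
    (hF : ContinuousAt F (limsup f atTop))
    (hf' : ∀ ε > 0, ∀ᶠ t in atTop, f' t ≤ F (f t) + ε) : 0 ≤ F (limsup f atTop) := by
  set L := limsup f atTop
  by_contra! hL
  obtain ⟨δ, hδ, hFδ⟩ := Metric.eventually_nhds_iff.1
    (hF.eventually_lt_const (show F L < F L / 2 by linarith))
  have hdrift : ∀ᶠ t in atTop, L - δ / 2 ≤ f t → f' t ≤ -(-F L / 4) := by
    filter_upwards [eventually_lt_of_limsup_lt (lt_add_of_pos_right L hδ) hbdd,
      hf' (-F L / 4) (by linarith)] with t hlt hderiv hge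
    have := hFδ (y := f t) (by rw [Real.dist_eq, abs_lt]; constructor <;> linarith)
    linarith
  have := limsup_le_of_le hbdd'.isCoboundedUnder_le
    (eventually_le_of_deriv_le_neg (by linarith) hf hdrift)
  linarith

theorem apply_liminf_nonpos_of_le_deriv (hf : ∀ᶠ t in atTop, HasDerivAt f (f' t) t)
    (hbdd : IsBoundedUnder (· ≤ ·) atTop f) (hbdd' : IsBoundedUnder (· ≥ ·) atTop f)
    (hF : ContinuousAt F (liminf f atTop))
    (hf' : ∀ ε > 0, ∀ᶠ t in atTop, F (f t) - ε ≤ f' t) : F (liminf f atTop) ≤ 0 := by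
  have hneg : -liminf f atTop = limsup (-f) atTop :=
    Antitone.map_liminf_of_continuousAt (fun _ _ => neg_le_neg) f
      continuous_neg.continuousAt hbdd.isCoboundedUnder_ge hbdd'
  have := apply_limsup_nonneg_of_deriv_le (f := -f) (F := fun y => -F (-y))
    (hf.mono fun t ht => ht.neg) (isBoundedUnder_le_neg.2 hbdd') (isBoundedUnder_ge_neg.2 hbdd)
    (by rw [← hneg]; exact (hF.comp_of_eq continuous_neg.continuousAt (neg_neg _)).neg)
    (fun ε hε => (hf' ε hε).mono fun t ht => by simp only [Pi.neg_apply, neg_neg]; linarith)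
  rw [← hneg, neg_neg] at this
  linarith

end Fluctuation

section Squares

variable {ι : Type*} {l : Filter ι} {u : ι → ℝ} {y : ℝ}

theorem eventually_sq_lt_of_limsup_sq_lt (hu : IsBoundedUnder (· ≤ ·) l u)
    (hu₀ : ∀ᶠ i in l, 0 ≤ u i) (h : limsup u l ^ 2 < y) : ∀ᶠ i in l, u i ^ 2 < y := by
  have hlt : limsup u l < √y := (le_abs_self _).trans_lt <| by
    rw [← Real.sqrt_sq_eq_abs]; exact Real.sqrt_lt_sqrt (sq_nonneg _) h
  filter_upwards [eventually_lt_of_limsup_lt hlt hu, hu₀] with i hi hi₀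
  exact (Real.lt_sqrt hi₀).1 hi

theorem eventually_lt_sq_of_lt_liminf_sq (hu : IsBoundedUnder (· ≥ ·) l u)
    (hpos : 0 < liminf u l) (h : y < liminf u l ^ 2) : ∀ᶠ i in l, y < u i ^ 2 := by
  filter_upwards [eventually_lt_of_lt_liminf ((Real.sqrt_lt' hpos).2 h) hu] with i hi
  exact (Real.sqrt_lt' ((Real.sqrt_nonneg y).trans_lt hi)).1 hi

end Squares

structure IsNonnegSolution (r α σ c p : ℝ) (u v : ℝ → ℝ) : Prop where
  hasDerivAt_fst : ∀ t ≥ 0, HasDerivAt u (u t * (r - α * u t) + σ * v t) t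
  hasDerivAt_snd : ∀ t ≥ 0, HasDerivAt v (p * α * u t ^ 2 - c * v t) t
  nonneg : ∀ t ≥ 0, 0 ≤ u t ∧ 0 ≤ v t

namespace IsNonnegSolution

variable {r α σ c p : ℝ} {u v : ℝ → ℝ}

theorem eventually_hasDerivAt_fst (hs : IsNonnegSolution r α σ c p u v) :
    ∀ᶠ t in atTop, HasDerivAt u (u t * (r - α * u t) + σ * v t) t :=
  eventually_atTop.2 ⟨0, hs.hasDerivAt_fst⟩

theorem eventually_hasDerivAt_snd (hs : IsNonnegSolution r α σ c p u v) :
    ∀ᶠ t in atTop, HasDerivAt v (p * α * u t ^ 2 - c * v t) t :=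
  eventually_atTop.2 ⟨0, hs.hasDerivAt_snd⟩

theorem eventually_nonneg_fst (hs : IsNonnegSolution r α σ c p u v) : ∀ᶠ t in atTop, 0 ≤ u t :=
  eventually_atTop.2 ⟨0, fun t ht => (hs.nonneg t ht).1⟩

theorem eventually_nonneg_snd (hs : IsNonnegSolution r α σ c p u v) : ∀ᶠ t in atTop, 0 ≤ v t :=
  eventually_atTop.2 ⟨0, fun t ht => (hs.nonneg t ht).2⟩

/-- The weights make the `v`-terms of `W' + (c - σ p) W / 2` cancel, leaving a concave
quadratic in `u`. -/
theorem isBoundedUnder_le (hs : IsNonnegSolution r α σ c p u v) (hα : 0 < α) (hσ : 0 < σ)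
    (hp : 0 ≤ p) (hpc : σ * p < c) :
    IsBoundedUnder (· ≤ ·) atTop u ∧ IsBoundedUnder (· ≤ ·) atTop v := by
  set d := c - σ * p
  set K := (σ * p + c) * (r + d / 2)
  set C := K ^ 2 / (4 * (α * d))
  set W := fun t => (σ * p + c) * u t + 2 * σ * v t
  have hd : 0 < d := sub_pos.2 hpc
  have hsum : 0 < σ * p + c := by nlinarith
  have hW : ∀ t ≥ 0, HasDerivAt W (K * u t - α * d * u t ^ 2 - d / 2 * W t) t := fun t ht =>
    (((hs.hasDerivAt_fst t ht).const_mul (σ * p + c)).add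
      ((hs.hasDerivAt_snd t ht).const_mul (2 * σ))).congr_deriv (by simp only [W, K, d]; ring)
  have hquad : ∀ x, K * x - α * d * x ^ 2 ≤ C := fun x => by
    rw [le_div_iff₀ (by positivity)]; nlinarith [sq_nonneg (2 * (α * d) * x - K)]
  have hWle : ∀ᶠ t in atTop, W t ≤ 2 * (C + 1) / d :=
    eventually_le_of_deriv_le_neg one_pos (eventually_atTop.2 ⟨0, hW⟩) <| .of_forall fun t hρ => by
      rw [div_le_iff₀ hd] at hρ; linarith [hquad (u t)]
  have hbound : ∀ᶠ t in atTop,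
      (σ * p + c) * u t ≤ 2 * (C + 1) / d ∧ 2 * σ * v t ≤ 2 * (C + 1) / d := by
    filter_upwards [hWle, eventually_ge_atTop 0] with t hWt ht
    obtain ⟨hu, hv⟩ := hs.nonneg t ht
    constructor <;> nlinarith
  exact ⟨isBoundedUnder_of_eventually_le (hbound.mono fun _ h => (le_div_iff₀' hsum).2 h.1),
    isBoundedUnder_of_eventually_le (hbound.mono fun _ h => (le_div_iff₀' (by positivity)).2 h.2)⟩

theorem exists_pos_fst (hs : IsNonnegSolution r α σ c p u v) (hσ : 0 < σ)
    (h₀ : (u 0, v 0) ≠ (0, 0)) : ∃ t ≥ 0, 0 < u t := by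
  by_contra! h
  have hu : EqOn u (fun _ => 0) (Ici 0) := fun t ht => le_antisymm (h t ht) (hs.nonneg t ht).1
  have hu₀ : u 0 = 0 := hu self_mem_Ici
  have hderiv := (uniqueDiffOn_Ici (0 : ℝ) 0 self_mem_Ici).eq_deriv _
    (hs.hasDerivAt_fst 0 le_rfl).hasDerivWithinAt
    ((hasDerivWithinAt_const 0 _ 0).congr_of_mem hu self_mem_Ici)
  rw [hu₀, zero_mul, zero_add, mul_eq_zero] at hderiv
  exact h₀ (Prod.ext hu₀ (hderiv.resolve_left hσ.ne'))

theorem exists_eventually_ge_fst (hs : IsNonnegSolution r α σ c p u v) (hα : 0 < α) (hr : 0 < r)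
    (hσ : 0 < σ) (h₀ : (u 0, v 0) ≠ (0, 0)) : ∃ η > 0, ∀ᶠ t in atTop, η ≤ u t := by
  obtain ⟨t₀, ht₀, hu₀⟩ := hs.exists_pos_fst hσ h₀
  refine ⟨min (u t₀) (r / α), lt_min hu₀ (div_pos hr hα), eventually_atTop.2 ⟨t₀, ?_⟩⟩
  refine le_of_deriv_nonneg_below (fun t ht => hs.hasDerivAt_fst t (ht₀.trans ht))
    (fun t ht hlt => ?_) (min_le_left _ _)
  obtain ⟨hu, hv⟩ := hs.nonneg t (ht₀.trans ht)
  have : α * u t < r := (lt_div_iff₀' hα).1 (hlt.trans_le (min_le_right _ _))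
  exact add_nonneg (mul_nonneg hu (by linarith)) (mul_nonneg hσ.le hv)

theorem limsup_fst_mul_add_nonneg (hs : IsNonnegSolution r α σ c p u v) (hσ : 0 < σ)
    (hu : IsBoundedUnder (· ≤ ·) atTop u) (hv : IsBoundedUnder (· ≤ ·) atTop v) :
    0 ≤ limsup u atTop * (r - α * limsup u atTop) + σ * limsup v atTop := by
  refine apply_limsup_nonneg_of_deriv_le (F := fun x => x * (r - α * x) + σ * limsup v atTop)
    hs.eventually_hasDerivAt_fst hu (isBoundedUnder_of_eventually_ge hs.eventually_nonneg_fst)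
    (by fun_prop) fun ε hε => ?_
  filter_upwards [eventually_lt_of_limsup_lt (lt_add_of_pos_right _ (div_pos hε hσ)) hv] with t ht
  have := mul_lt_mul_of_pos_left ht hσ
  rw [mul_add, mul_div_cancel₀ _ hσ.ne'] at this
  linarith

theorem liminf_fst_mul_add_nonpos (hs : IsNonnegSolution r α σ c p u v) (hσ : 0 < σ)
    (hu : IsBoundedUnder (· ≤ ·) atTop u) :
    liminf u atTop * (r - α * liminf u atTop) + σ * liminf v atTop ≤ 0 := by
  refine apply_liminf_nonpos_of_le_deriv (F := fun x => x * (r - α * x) + σ * liminf v atTop)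
    hs.eventually_hasDerivAt_fst hu (isBoundedUnder_of_eventually_ge hs.eventually_nonneg_fst)
    (by fun_prop) fun ε hε => ?_
  filter_upwards [eventually_lt_of_lt_liminf (sub_lt_self _ (div_pos hε hσ))
    (isBoundedUnder_of_eventually_ge hs.eventually_nonneg_snd)] with t ht
  have := mul_lt_mul_of_pos_left ht hσ
  rw [mul_sub, mul_div_cancel₀ _ hσ.ne'] at this
  linarith

theorem mul_limsup_snd_le (hs : IsNonnegSolution r α σ c p u v) (hα : 0 < α) (hp : 0 < p)
    (hu : IsBoundedUnder (· ≤ ·) atTop u) (hv : IsBoundedUnder (· ≤ ·) atTop v) :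
    c * limsup v atTop ≤ p * α * limsup u atTop ^ 2 := by
  have hpα := mul_pos hp hα
  have := apply_limsup_nonneg_of_deriv_le
    (F := fun y => p * α * limsup u atTop ^ 2 - c * y) hs.eventually_hasDerivAt_snd hv
    (isBoundedUnder_of_eventually_ge hs.eventually_nonneg_snd) (by fun_prop) fun ε hε => by
      filter_upwards [eventually_sq_lt_of_limsup_sq_lt hu hs.eventually_nonneg_fst
        (lt_add_of_pos_right _ (div_pos hε hpα))] with t ht
      have := mul_lt_mul_of_pos_left ht hpα
      rw [mul_add, mul_div_cancel₀ _ hpα.ne'] at this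
      linarith
  linarith

theorem le_mul_liminf_snd (hs : IsNonnegSolution r α σ c p u v) (hα : 0 < α) (hp : 0 < p)
    (hv : IsBoundedUnder (· ≤ ·) atTop v) (hpos : 0 < liminf u atTop) :
    p * α * liminf u atTop ^ 2 ≤ c * liminf v atTop := by
  have hpα := mul_pos hp hα
  have := apply_liminf_nonpos_of_le_deriv
    (F := fun y => p * α * liminf u atTop ^ 2 - c * y) hs.eventually_hasDerivAt_snd hv
    (isBoundedUnder_of_eventually_ge hs.eventually_nonneg_snd) (by fun_prop) fun ε hε => by
      filter_upwards [eventually_lt_sq_of_lt_liminf_sq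
        (isBoundedUnder_of_eventually_ge hs.eventually_nonneg_fst) hpos
        (sub_lt_self _ (div_pos hε hpα))] with t ht
      have := mul_lt_mul_of_pos_left ht hpα
      rw [mul_sub, mul_div_cancel₀ _ hpα.ne'] at this
      linarith
  linarith

theorem limsup_fst_le (hs : IsNonnegSolution r α σ c p u v) (hα : 0 < α) (hσ : 0 < σ)
    (hp : 0 < p) (hpc : σ * p < c) (hr : 0 ≤ r) :
    limsup u atTop ≤ r * c / (α * (c - σ * p)) := by
  obtain ⟨hu, hv⟩ := hs.isBoundedUnder_le hα hσ hp.le hpc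
  set A := limsup u atTop
  have hA : 0 ≤ A := (le_liminf_of_le hu.isCoboundedUnder_ge hs.eventually_nonneg_fst).trans
    (liminf_le_limsup hu (isBoundedUnder_of_eventually_ge hs.eventually_nonneg_fst))
  have hsup := hs.limsup_fst_mul_add_nonneg hσ hu hv
  have hsnd := hs.mul_limsup_snd_le hα hp hu hv
  have hc : 0 < c := by nlinarith
  have key : A * (α * (c - σ * p) * A) ≤ A * (r * c) := by
    nlinarith [mul_nonneg hc.le hsup, mul_le_mul_of_nonneg_left hsnd hσ.le]
  rw [le_div_iff₀ (mul_pos hα (sub_pos.2 hpc))]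
  rcases hA.eq_or_lt with hA | hA
  · rw [← hA, zero_mul]; positivity
  · linarith [le_of_mul_le_mul_left key hA]

theorem le_liminf_fst (hs : IsNonnegSolution r α σ c p u v) (hα : 0 < α) (hσ : 0 < σ)
    (hp : 0 < p) (hpc : σ * p < c) (hr : 0 < r) (h₀ : (u 0, v 0) ≠ (0, 0)) :
    r * c / (α * (c - σ * p)) ≤ liminf u atTop := by
  obtain ⟨hu, hv⟩ := hs.isBoundedUnder_le hα hσ hp.le hpc
  obtain ⟨η, hη, hηu⟩ := hs.exists_eventually_ge_fst hα hr hσ h₀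
  set a := liminf u atTop
  have ha : 0 < a := hη.trans_le (le_liminf_of_le hu.isCoboundedUnder_ge hηu)
  have hinf := hs.liminf_fst_mul_add_nonpos hσ hu
  have hsnd := hs.le_mul_liminf_snd hα hp hv ha
  have hc : 0 < c := by nlinarith
  have key : a * (r * c) ≤ a * (α * (c - σ * p) * a) := by
    nlinarith [mul_nonpos_of_nonneg_of_nonpos hc.le hinf, mul_le_mul_of_nonneg_left hsnd hσ.le]
  rw [div_le_iff₀ (mul_pos hα (sub_pos.2 hpc))]
  linarith [le_of_mul_le_mul_left key ha]

theorem tendsto_fst (hs : IsNonnegSolution r α σ c p u v) (hα : 0 < α) (hσ : 0 < σ)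
    (hp : 0 < p) (hpc : σ * p < c) (hr : 0 < r) (h₀ : (u 0, v 0) ≠ (0, 0)) :
    Tendsto u atTop (𝓝 (r * c / (α * (c - σ * p)))) :=
  tendsto_of_le_liminf_of_limsup_le (hs.le_liminf_fst hα hσ hp hpc hr h₀)
    (hs.limsup_fst_le hα hσ hp hpc hr.le) (hs.isBoundedUnder_le hα hσ hp.le hpc).1
    (isBoundedUnder_of_eventually_ge hs.eventually_nonneg_fst)

theorem tendsto_snd (hs : IsNonnegSolution r α σ c p u v) (hα : 0 < α) (hσ : 0 < σ)
    (hp : 0 < p) (hpc : σ * p < c) {x : ℝ} (hx : 0 < x) (hux : Tendsto u atTop (𝓝 x)) :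
    Tendsto v atTop (𝓝 (p * α * x ^ 2 / c)) := by
  obtain ⟨hu, hv⟩ := hs.isBoundedUnder_le hα hσ hp.le hpc
  have hc : 0 < c := by nlinarith
  refine tendsto_of_le_liminf_of_limsup_le ?_ ?_ hv
    (isBoundedUnder_of_eventually_ge hs.eventually_nonneg_snd)
  · rw [div_le_iff₀' hc, ← hux.liminf_eq]
    exact hs.le_mul_liminf_snd hα hp hv (hux.liminf_eq ▸ hx)
  · rw [le_div_iff₀' hc, ← hux.limsup_eq]
    exact hs.mul_limsup_snd_le hα hp hu hv

end IsNonnegSolution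

/-- Every nonnegative solution of the two-dimensional mutant ODE system
whose initial condition is not `(0,0)` converges to the unique coordinatewise positive
equilibrium `(n̄2a, n̄2d)` as `t → ∞`. -/
theorem two_dim_mutant_system_global_convergence
    (lam2 μ α σ κ p : ℝ)
    (hμ : 0 < μ) (hμlam : μ < lam2) (hα : 0 < α) (hσ : 0 < σ)
    (hκ : 0 ≤ κ) (hp0 : 0 < p) (hp1 : p < 1)
    (n2a n2d : ℝ → ℝ)
    (hderiva : ∀ t ≥ (0 : ℝ),
      HasDerivAt n2a (n2a t * (lam2 - μ - α * n2a t) + σ * n2d t) t)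
    (hderivd : ∀ t ≥ (0 : ℝ),
      HasDerivAt n2d (p * α * (n2a t) ^ 2 - (κ * μ + σ) * n2d t) t)
    (hnonneg : ∀ t ≥ (0 : ℝ), 0 ≤ n2a t ∧ 0 ≤ n2d t)
    (hinit : (n2a 0, n2d 0) ≠ (0, 0)) :
    Tendsto (fun t => (n2a t, n2d t)) atTop
      (nhds ((lam2 - μ) * (κ * μ + σ) / (α * (κ * μ + (1 - p) * σ)),
        (lam2 - μ) ^ 2 * p * (κ * μ + σ) / (α * (κ * μ + (1 - p) * σ) ^ 2))) := by
  have hs : IsNonnegSolution (lam2 - μ) α σ (κ * μ + σ) p n2a n2d := ⟨hderiva, hderivd, hnonneg⟩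
  have hpc : σ * p < κ * μ + σ := by nlinarith [mul_nonneg hκ hμ.le]
  have hu := hs.tendsto_fst hα hσ hp0 hpc (sub_pos.2 hμlam) hinit
  have hv := hs.tendsto_snd hα hσ hp0 hpc (by positivity) hu
  have hden : κ * μ + σ - σ * p = κ * μ + (1 - p) * σ := by ring
  rw [hden] at hu hv
  convert hu.prodMk_nhds hv using 3
  field_simp
end

section
/- Let 0 < μ < λ2 < λ1, α > 0, σ > 0, κ ≥ 0 and p ∈ (0,1), assume the invasion condition λ1 − λ2 < p(λ1 − μ) σ/(κμ + σ), set n̄1 = (λ1 − μ)/α, let λ̃ > 0 be the largest eigenvalue of J = [[λ2 − λ1, p(λ1 − μ)], [σ, −κμ − σ]], and let (π_{2a}, π_{2d}) be the coordinatewise positive left eigenvector of J for λ̃ with π_{2a} + π_{2d} = 1. Then for every C > 0 there exists ε₀ > 0 such that for all ε ∈ (0, ε₀): whenever n1, n_{2a}, n_{2d} > 0 satisfy n1 ∈ (n̄1 − 2ε, n̄1 + 2ε), n_{2a} + n_{2d} ∈ (ε/C, √ε), and n_{2d}/n_{2a} = π_{2d}/π_{2a}, the triple (n1, n_{2a}, n_{2d})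 satisfies pα(n1 + n_{2a})/(κμ + σ) > n_{2d}/n_{2a} > (μ − λ2 + α(n1 + n_{2a}))/σ. -/
/-!
The left eigenvector equations say that the ratio `r = π₁ / π₀` satisfies
`r σ = λ̃ + λ₁ - λ₂` and `p (λ₁ - μ) = r (λ̃ + κμ + σ)`. Since `λ̃ > 0`, the ray of slope `r`
lies strictly inside the attraction cone at the resident equilibrium `n₁ + n_{2a} = n̄₁`.
Both cone conditions are affine in `n₁ + n_{2a}`, hence remain true nearby, and the starting
triples have `|n₁ + n_{2a} - n̄₁| < 2ε + √ε`, which is small for small `ε`.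
-/

open Matrix Filter Topology

lemma left_eigenvector_fin_two_ratio {a b c d l : ℝ} {π : Fin 2 → ℝ} (hπ : π 0 ≠ 0)
    (h : π ᵥ* !![a, b; c, d] = l • π) :
    a + π 1 / π 0 * c = l ∧ b + π 1 / π 0 * d = l * (π 1 / π 0) := by
  have h0 := congrFun h 0
  have h1 := congrFun h 1
  simp only [vecMul, dotProduct, Fin.sum_univ_two, of_apply, cons_val', cons_val_zero,
    cons_val_one, empty_val', cons_val_fin_one, Pi.smul_apply, smul_eq_mul] at h0 h1
  constructor <;> field_simp <;> linarith

lemma eigenratio_mem_attraction_cone_at_equilibrium {lam1 lam2 μ α σ κ p l r : ℝ}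
    (hα : 0 < α) (hσ : 0 < σ) (hκμσ : 0 < κ * μ + σ) (hl : 0 < l) (hr : 0 < r)
    (ha : lam2 - lam1 + r * σ = l) (hd : p * (lam1 - μ) + r * (-(κ * μ) - σ) = l * r) :
    r < p * α * ((lam1 - μ) / α) / (κ * μ + σ) ∧
      (μ - lam2 + α * ((lam1 - μ) / α)) / σ < r := by
  rw [mul_assoc, mul_div_cancel₀ _ hα.ne', lt_div_iff₀ hκμσ, div_lt_iff₀ hσ]
  constructor <;> nlinarith

lemma exists_pos_forall_two_mul_add_sqrt_lt {δ : ℝ} (hδ : 0 < δ) :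
    ∃ ε₀ > 0, ∀ ε ∈ Set.Ioo 0 ε₀, 2 * ε + √ε < δ := by
  have hcont : Continuous fun ε : ℝ => 2 * ε + √ε := by fun_prop
  have hsmall : ∀ᶠ ε in 𝓝 0, 2 * ε + √ε < δ :=
    hcont.continuousAt.eventually_lt continuousAt_const (by simpa using hδ)
  obtain ⟨ε₀, hε₀, h⟩ := Metric.eventually_nhds_iff.1 hsmall
  refine ⟨ε₀, hε₀, fun ε hε => h ?_⟩
  rw [Real.dist_eq, sub_zero, abs_of_pos hε.1]
  exact hε.2

theorem good_start_in_attraction_cone_general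
    (lam1 lam2 μ α σ κ p : ℝ)
    (hμ : 0 < μ) (hα : 0 < α) (hσ : 0 < σ)
    (hκ : 0 ≤ κ)
    (lamTilde : ℝ) (hlamTpos : 0 < lamTilde)
    (π : Fin 2 → ℝ) (hπa : 0 < π 0) (hπd : 0 < π 1)
    (hπeig : π ᵥ* (!![lam2 - lam1, p * (lam1 - μ); σ, -(κ * μ) - σ] :
      Matrix (Fin 2) (Fin 2) ℝ) = lamTilde • π) :
    ∀ C > (0 : ℝ), ∃ ε₀ > (0 : ℝ), ∀ ε ∈ Set.Ioo (0 : ℝ) ε₀,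
      ∀ n1 n2a n2d : ℝ, 0 < n1 → 0 < n2a → 0 < n2d →
        n1 ∈ Set.Ioo ((lam1 - μ) / α - 2 * ε) ((lam1 - μ) / α + 2 * ε) →
        n2a + n2d ∈ Set.Ioo (ε / C) (Real.sqrt ε) →
        n2d / n2a = π 1 / π 0 →
        n2d / n2a < p * α * (n1 + n2a) / (κ * μ + σ) ∧
          (μ - lam2 + α * (n1 + n2a)) / σ < n2d / n2a := by
  intro C _
  set r := π 1 / π 0
  obtain ⟨ha, hd⟩ := left_eigenvector_fin_two_ratio hπa.ne' hπeig
  have hcone := eigenratio_mem_attraction_cone_at_equilibrium hα hσ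
    (by positivity : 0 < κ * μ + σ) hlamTpos (div_pos hπd hπa) ha hd
  have hnear : ∀ᶠ s in 𝓝 ((lam1 - μ) / α),
      r < p * α * s / (κ * μ + σ) ∧ (μ - lam2 + α * s) / σ < r :=
    (continuousAt_const.eventually_lt (g := fun s => p * α * s / (κ * μ + σ))
      (by fun_prop) hcone.1).and
      (ContinuousAt.eventually_lt (f := fun s => (μ - lam2 + α * s) / σ) (by fun_prop)
        continuousAt_const hcone.2)
  obtain ⟨η, hη, hcone_near⟩ := Metric.eventually_nhds_iff.1 hnear
  obtain ⟨ε₀, hε₀, hsmall⟩ := exists_pos_forall_two_mul_add_sqrt_lt hη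
  refine ⟨ε₀, hε₀, ?_⟩
  rintro ε hε n1 n2a n2d - hn2a hn2d ⟨hn1lo, hn1hi⟩ ⟨-, hsum⟩ hratio
  rw [hratio]
  apply hcone_near
  have := hsmall ε hε
  rw [Real.dist_eq, abs_sub_lt_iff]
  constructor <;> linarith [Real.sqrt_nonneg ε]

/-- Under the invasion condition, for every `C > 0` there exists
`ε₀ > 0` such that for all `ε ∈ (0, ε₀)`: any positive triple `(n1, n2a, n2d)` with
`n1 ∈ (n̄1 − 2ε, n̄1 + 2ε)`, `n2a + n2d ∈ (ε/C, √ε)` and `n2d/n2a = π2d/π2a`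
(where `(π2a, π2d)` is the normalized positive left eigenvector of the mean matrix
`J` for its largest eigenvalue `λ̃ > 0`) lies in the attraction cone
`pα(n1+n2a)/(κμ+σ) > n2d/n2a > (μ−λ2+α(n1+n2a))/σ`. -/
theorem good_start_in_attraction_cone
    (lam1 lam2 μ α σ κ p : ℝ)
    (hμ : 0 < μ) (hμlam : μ < lam2) (hlam : lam2 < lam1) (hα : 0 < α) (hσ : 0 < σ)
    (hκ : 0 ≤ κ) (hp0 : 0 < p) (hp1 : p < 1)
    (hinv : lam1 - lam2 < p * (lam1 - μ) * σ / (κ * μ + σ))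
    (lamTilde : ℝ) (hlamTpos : 0 < lamTilde)
    (hlamTmem : lamTilde ∈ spectrum ℝ
      (!![lam2 - lam1, p * (lam1 - μ); σ, -(κ * μ) - σ] : Matrix (Fin 2) (Fin 2) ℝ))
    (hlamTmax : ∀ r : ℝ, r ∈ spectrum ℝ
      (!![lam2 - lam1, p * (lam1 - μ); σ, -(κ * μ) - σ] : Matrix (Fin 2) (Fin 2) ℝ) →
      r ≤ lamTilde)
    (π : Fin 2 → ℝ) (hπa : 0 < π 0) (hπd : 0 < π 1) (hπsum : π 0 + π 1 = 1)
    (hπeig : π ᵥ* (!![lam2 - lam1, p * (lam1 - μ); σ, -(κ * μ) - σ] :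
      Matrix (Fin 2) (Fin 2) ℝ) = lamTilde • π) :
    ∀ C > (0 : ℝ), ∃ ε₀ > (0 : ℝ), ∀ ε ∈ Set.Ioo (0 : ℝ) ε₀,
      ∀ n1 n2a n2d : ℝ, 0 < n1 → 0 < n2a → 0 < n2d →
        n1 ∈ Set.Ioo ((lam1 - μ) / α - 2 * ε) ((lam1 - μ) / α + 2 * ε) →
        n2a + n2d ∈ Set.Ioo (ε / C) (Real.sqrt ε) →
        n2d / n2a = π 1 / π 0 →
        n2d / n2a < p * α * (n1 + n2a) / (κ * μ + σ) ∧
          (μ - lam2 + α * (n1 + n2a)) / σ < n2d / n2a :=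
  good_start_in_attraction_cone_general lam1 lam2 μ α σ κ p hμ hα hσ hκ lamTilde hlamTpos π hπa hπd
    hπeig
end

section
/- Let 0 < μ < λ2 < λ1, σ > 0, κ ≥ 0 and p ∈ (0,1), assume the invasion condition λ1 − λ2 < p(λ1 − μ) σ/(κμ + σ), and define the quadratic polynomial S(x) = (λ2 + κμ − μ − (1−p)(λ1 − μ)) x(1 − x) + σ(1 − x) − p(λ1 − μ) x. Then S(0) > 0 and S(1) < 0, S has a unique root in the open interval (0,1), and this root equals π_{2a}, the first coordinate of the coordinatewise positive left eigenvector (π_{2a}, π_{2d}) of the matrix J = [[λ2 − λ1, p(λ1 − μ)], [σ, −κμ − σ]] associated to its largest eigenvalue λ̃, normalized by π_{2a} + π_{2d} = 1. -/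
/-!
Eliminating `λ̃` from the eigen-equations `π ᵥ* J = λ̃ • π` leaves a quadratic equation
in the fraction `π 0 / (π 0 + π 1)`, which is exactly `S (π 0) = 0`. Since `S 0 = σ > 0` and
`S 1 = -p (λ1 - μ) < 0`, the quadratic `S` changes sign on `[0, 1]`; two distinct roots `x, y`
in `(0, 1)` would factor it as `c (t - x) (t - y)`, giving `S 0` and `S 1` the same sign.
-/

open Matrix

theorem fin_two_quadratic_of_vecMul_eq_smul {R : Type*} [CommRing R]
    {M : Matrix (Fin 2) (Fin 2) R} {π : Fin 2 → R} {r : R} (h : π ᵥ* M = r • π) :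
    (M 0 0 - M 1 1) * (π 0 * π 1) + M 1 0 * π 1 ^ 2 - M 0 1 * π 0 ^ 2 = 0 := by
  have e0 := congrFun h 0
  have e1 := congrFun h 1
  simp only [vecMul, dotProduct, Fin.sum_univ_two, Pi.smul_apply, smul_eq_mul] at e0 e1
  linear_combination π 1 * e0 - π 0 * e1

theorem quadratic_zeros_Ioo_subsingleton {q : ℝ → ℝ} {A B C : ℝ}
    (hq : ∀ t, q t = A * t ^ 2 + B * t + C) (hsign : q 0 * q 1 < 0) :
    {x ∈ Set.Ioo (0 : ℝ) 1 | q x = 0}.Subsingleton := by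
  rintro x ⟨⟨hx0, hx1⟩, hqx⟩ y ⟨⟨hy0, hy1⟩, hqy⟩
  by_contra hne
  rw [hq] at hqx hqy
  have hvieta_sum : A * (x + y) + B = 0 :=
    mul_left_cancel₀ (sub_ne_zero.mpr hne) (by linear_combination hqx - hqy)
  have hq0 : q 0 = A * x * y := by
    rw [hq]; linear_combination hqx - x * hvieta_sum
  have hq1 : q 1 = A * (1 - x) * (1 - y) := by
    rw [hq]; linear_combination hqx - (x - 1) * hvieta_sum
  have hx1' : 0 < 1 - x := by linarith
  have hy1' : 0 < 1 - y := by linarith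
  have hsign' : 0 ≤ q 0 * q 1 :=
    calc (0 : ℝ) ≤ A ^ 2 * (x * y) * ((1 - x) * (1 - y)) := by positivity
      _ = q 0 * q 1 := by rw [hq0, hq1]; ring
  linarith

theorem drift_polynomial_unique_root_general
    (lam1 lam2 μ σ κ p : ℝ)
    (hμlam : μ < lam2) (hlam : lam2 < lam1) (hσ : 0 < σ)
    (hp0 : 0 < p)
    (lamTilde : ℝ)
    (π : Fin 2 → ℝ) (hπa : 0 < π 0) (hπd : 0 < π 1) (hπsum : π 0 + π 1 = 1)
    (hπeig : π ᵥ* (!![lam2 - lam1, p * (lam1 - μ); σ, -(κ * μ) - σ] :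
      Matrix (Fin 2) (Fin 2) ℝ) = lamTilde • π) :
    let S : ℝ → ℝ := fun x =>
      (lam2 + κ * μ - μ - (1 - p) * (lam1 - μ)) * (x * (1 - x)) +
        σ * (1 - x) - p * (lam1 - μ) * x
    S 0 > 0 ∧ S 1 < 0 ∧ π 0 ∈ Set.Ioo (0 : ℝ) 1 ∧
      ∀ x ∈ Set.Ioo (0 : ℝ) 1, (S x = 0 ↔ x = π 0) := by
  intro S
  have hS0 : S 0 = σ := by simp [S]
  have hS1 : S 1 = -(p * (lam1 - μ)) := by simp [S]
  have hπ0_mem : π 0 ∈ Set.Ioo (0 : ℝ) 1 := ⟨hπa, by linarith⟩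
  have hSπ : S (π 0) = 0 := by
    have h := fin_two_quadratic_of_vecMul_eq_smul hπeig
    simp only [of_apply, cons_val', cons_val_zero, cons_val_one, empty_val',
      cons_val_fin_one] at h
    rw [show π 1 = 1 - π 0 by linarith] at h
    linear_combination h
  have hβ : 0 < p * (lam1 - μ) := mul_pos hp0 (by linarith)
  have hunique := quadratic_zeros_Ioo_subsingleton (q := S)
    (A := -(lam2 + κ * μ - μ - (1 - p) * (lam1 - μ)))
    (B := lam2 + κ * μ - μ - (1 - p) * (lam1 - μ) - σ - p * (lam1 - μ)) (C := σ)
    (fun t => by simp only [S]; ring)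
    (by rw [hS0, hS1]; exact mul_neg_of_pos_of_neg hσ (neg_neg_of_pos hβ))
  refine ⟨by linarith, by linarith, hπ0_mem, fun x hx => ⟨fun hSx => ?_, ?_⟩⟩
  · exact hunique ⟨hx, hSx⟩ ⟨hπ0_mem, hSπ⟩
  · rintro rfl; exact hSπ

/-- Under the invasion condition, the drift polynomial
`S(x) = (λ2 + κμ − μ − (1−p)(λ1 − μ)) x(1−x) + σ(1−x) − p(λ1 − μ)x` satisfies
`S(0) > 0`, `S(1) < 0`, and has a unique root in `(0,1)`, which equals `π2a`,
the first coordinate of the normalized positive left eigenvector of the mean matrix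
`J` associated to its largest eigenvalue `λ̃`. -/
theorem drift_polynomial_unique_root
    (lam1 lam2 μ σ κ p : ℝ)
    (hμ : 0 < μ) (hμlam : μ < lam2) (hlam : lam2 < lam1) (hσ : 0 < σ)
    (hκ : 0 ≤ κ) (hp0 : 0 < p) (hp1 : p < 1)
    (hinv : lam1 - lam2 < p * (lam1 - μ) * σ / (κ * μ + σ))
    (lamTilde : ℝ) (hlamTpos : 0 < lamTilde)
    (hlamTmem : lamTilde ∈ spectrum ℝ
      (!![lam2 - lam1, p * (lam1 - μ); σ, -(κ * μ) - σ] : Matrix (Fin 2) (Fin 2) ℝ))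
    (hlamTmax : ∀ r : ℝ, r ∈ spectrum ℝ
      (!![lam2 - lam1, p * (lam1 - μ); σ, -(κ * μ) - σ] : Matrix (Fin 2) (Fin 2) ℝ) →
      r ≤ lamTilde)
    (π : Fin 2 → ℝ) (hπa : 0 < π 0) (hπd : 0 < π 1) (hπsum : π 0 + π 1 = 1)
    (hπeig : π ᵥ* (!![lam2 - lam1, p * (lam1 - μ); σ, -(κ * μ) - σ] :
      Matrix (Fin 2) (Fin 2) ℝ) = lamTilde • π) :
    let S : ℝ → ℝ := fun x =>
      (lam2 + κ * μ - μ - (1 - p) * (lam1 - μ)) * (x * (1 - x)) +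
        σ * (1 - x) - p * (lam1 - μ) * x
    S 0 > 0 ∧ S 1 < 0 ∧ π 0 ∈ Set.Ioo (0 : ℝ) 1 ∧
      ∀ x ∈ Set.Ioo (0 : ℝ) 1, (S x = 0 ↔ x = π 0) :=
  drift_polynomial_unique_root_general lam1 lam2 μ σ κ p hμlam hlam hσ hp0 lamTilde π hπa hπd hπsum
    hπeig
end

section
/- Let λ2, μ, σ, σ' > 0 and κ ≥ 0, and consider the real 2×2 matrix M = [[λ2 − μ − σ', σ], [σ', −(κμ + σ)]], the linearization at the origin of the mutant system with spontaneous switching. Then every complex eigenvalue of M has strictly negative real part if and only if λ2 < μ + κμσ'/(κμ + σ). In particular, for κ > 0 there exist values λ2 > μ for which the origin is asymptotically stable, i.e. the mutant population with spontaneous switching dies out in the deterministic limit despite λ2 > μ. -/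
/-!
A real `2 × 2` matrix has all its eigenvalues in the open left half-plane exactly when its trace is
negative and its determinant positive. For `M` the off-diagonal entries `σ, σ'` are positive and
`M₁₁ < 0`, so a positive determinant already forces `M₀₀ < 0` and hence a negative trace; and,
after clearing the positive denominator `κμ + σ`, `det M > 0` is the threshold condition on `λ₂`.
The threshold exceeds `μ` by `κμσ'/(κμ + σ)`, which is positive when `κ > 0`.
-/

open Matrix

theorem re_neg_of_quadratic_eq_zero {T D : ℝ} (hT : T < 0) (hD : 0 < D) {z : ℂ}
    (hz : z ^ 2 - T * z + D = 0) : z.re < 0 := by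
  have hre : z.re ^ 2 - z.im ^ 2 - T * z.re + D = 0 := by
    simpa [sq] using congrArg Complex.re hz
  have him : z.im * (2 * z.re - T) = 0 := by
    have := congrArg Complex.im hz
    simp only [sq, Complex.add_im, Complex.sub_im, Complex.mul_im, Complex.ofReal_re,
      Complex.ofReal_im, Complex.zero_im] at this
    linear_combination this
  rcases mul_eq_zero.mp him with him_zero | hre_half
  · rw [him_zero] at hre
    nlinarith
  · linarith

theorem exists_quadratic_eq_zero_re_nonneg {T D : ℝ} (h : ¬(T < 0 ∧ 0 < D)) :
    ∃ z : ℂ, z ^ 2 - T * z + D = 0 ∧ 0 ≤ z.re := by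
  rcases le_or_gt (4 * D) (T ^ 2) with hdisc | hdisc
  · set s := √(T ^ 2 - 4 * D)
    have hs : s ^ 2 = T ^ 2 - 4 * D := Real.sq_sqrt (by linarith)
    have hs0 : 0 ≤ s := Real.sqrt_nonneg _
    refine ⟨((T + s) / 2 : ℝ), ?_, ?_⟩
    · have : ((T + s) / 2) ^ 2 - T * ((T + s) / 2) + D = 0 := by linear_combination hs / 4
      exact_mod_cast this
    · rw [Complex.ofReal_re]
      by_contra! hneg
      exact h ⟨by linarith, by nlinarith⟩
  · set t := √(4 * D - T ^ 2)
    have ht : t ^ 2 = 4 * D - T ^ 2 := Real.sq_sqrt (by linarith)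
    refine ⟨⟨T / 2, t / 2⟩, ?_, ?_⟩
    · apply Complex.ext
      · simp only [sq, Complex.add_re, Complex.sub_re, Complex.mul_re, Complex.ofReal_re,
          Complex.ofReal_im, zero_mul, sub_zero, Complex.zero_re]
        linear_combination -ht / 4
      · simp only [sq, Complex.add_im, Complex.sub_im, Complex.mul_im, Complex.ofReal_re,
          Complex.ofReal_im, zero_mul, add_zero, Complex.zero_im]
        ring
    · by_contra! hneg
      change T / 2 < 0 at hneg
      exact h ⟨by linarith, by nlinarith⟩

theorem forall_quadratic_eq_zero_re_neg_iff (T D : ℝ) :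
    (∀ z : ℂ, z ^ 2 - T * z + D = 0 → z.re < 0) ↔ T < 0 ∧ 0 < D := by
  refine ⟨fun h => ?_, fun ⟨hT, hD⟩ _ hz => re_neg_of_quadratic_eq_zero hT hD hz⟩
  by_contra hTD
  obtain ⟨z, hz, hre⟩ := exists_quadratic_eq_zero_re_nonneg hTD
  exact (h z hz).not_ge hre

theorem Matrix.forall_spectrum_re_neg_iff_fin_two (A : Matrix (Fin 2) (Fin 2) ℝ) :
    (∀ z ∈ spectrum ℂ (A.map Complex.ofReal), z.re < 0) ↔ A.trace < 0 ∧ 0 < A.det := by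
  have hspec (z : ℂ) :
      z ∈ spectrum ℂ (A.map Complex.ofReal) ↔ z ^ 2 - A.trace * z + A.det = 0 := by
    rw [mem_spectrum_iff_isRoot_charpoly, charpoly_fin_two]
    simp [trace_fin_two, det_fin_two]
  simp_rw [hspec]
  exact forall_quadratic_eq_zero_re_neg_iff _ _

theorem Matrix.trace_neg_of_det_pos_fin_two {A : Matrix (Fin 2) (Fin 2) ℝ}
    (hoff : 0 ≤ A 0 1 * A 1 0) (h11 : A 1 1 < 0) (hdet : 0 < A.det) : A.trace < 0 := by
  rw [det_fin_two] at hdet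
  have h00 : A 0 0 < 0 := by nlinarith
  rw [trace_fin_two]
  linarith

theorem lt_threshold_iff_det_pos {lam2 μ σ σ' κ : ℝ} (hc : 0 < κ * μ + σ) :
    lam2 < μ + κ * μ * σ' / (κ * μ + σ) ↔
      0 < (lam2 - μ - σ') * -(κ * μ + σ) - σ * σ' := by
  have hcleared : (μ + κ * μ * σ' / (κ * μ + σ) - lam2) * (κ * μ + σ) =
      (lam2 - μ - σ') * -(κ * μ + σ) - σ * σ' := by
    rw [sub_mul, add_mul, div_mul_cancel₀ _ hc.ne']
    ring
  rw [← sub_pos, ← mul_pos_iff_of_pos_right hc, hcleared]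

theorem spontaneous_switching_origin_stability_general
    (lam2 μ σ σ' κ : ℝ)
    (hμ : 0 < μ) (hσ : 0 < σ) (hσ' : 0 < σ') (hκ : 0 ≤ κ) :
    let M : Matrix (Fin 2) (Fin 2) ℝ :=
      !![lam2 - μ - σ', σ; σ', -(κ * μ + σ)]
    ((∀ z : ℂ, z ∈ spectrum ℂ (M.map Complex.ofReal) → z.re < 0) ↔
        lam2 < μ + κ * μ * σ' / (κ * μ + σ)) ∧
      (0 < κ → ∃ lam2' : ℝ, μ < lam2' ∧ lam2' < μ + κ * μ * σ' / (κ * μ + σ)) := by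
  intro M
  have hc : 0 < κ * μ + σ := by positivity
  refine ⟨?_, fun hκ_pos => exists_between (lt_add_of_pos_right μ (by positivity))⟩
  rw [forall_spectrum_re_neg_iff_fin_two, and_iff_right_of_imp
    (trace_neg_of_det_pos_fin_two (show 0 ≤ σ * σ' by positivity)
      (show -(κ * μ + σ) < 0 by linarith)),
    lt_threshold_iff_det_pos hc, det_fin_two_of]

/-- For the spontaneous-switching linearization
`M = [[λ2 − μ − σ', σ], [σ', −(κμ + σ)]]`, every complex eigenvalue of `M` has
strictly negative real part iff `λ2 < μ + κμσ'/(κμ + σ)`. In particular, for `κ > 0`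
there exist values `λ2 > μ` for which the origin is asymptotically stable. -/
theorem spontaneous_switching_origin_stability
    (lam2 μ σ σ' κ : ℝ)
    (hlam2 : 0 < lam2) (hμ : 0 < μ) (hσ : 0 < σ) (hσ' : 0 < σ') (hκ : 0 ≤ κ) :
    let M : Matrix (Fin 2) (Fin 2) ℝ :=
      !![lam2 - μ - σ', σ; σ', -(κ * μ + σ)]
    ((∀ z : ℂ, z ∈ spectrum ℂ (M.map Complex.ofReal) → z.re < 0) ↔
        lam2 < μ + κ * μ * σ' / (κ * μ + σ)) ∧
      (0 < κ → ∃ lam2' : ℝ, μ < lam2' ∧ lam2' < μ + κ * μ * σ' / (κ * μ + σ)) :=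
  spontaneous_switching_origin_stability_general lam2 μ σ σ' κ hμ hσ hσ' hκ
end
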